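/- Let m ≥ 2, let a ∈ ℝ^m, and suppose the index k is the unique maximizer of a. For τ > 0 define the softmax probabilities p_i(τ) = exp(a_i/τ) / Σ_j exp(a_j/τ). Then the maximum probability p_k(τ) is antitone in τ on (0, ∞): if 0 < τ₁ ≤ τ₂ then p_k(τ₁) ≥ p_k(τ₂). Hence decreasing the temperature makes the softmax distribution sharper. -/
import Mathlib


/-- If `k` is the unique maximizer of the logits `a`, then the maximum softmax
probability `p_k(τ) = exp(a k/τ) / ∑ j, exp(a j/τ)` is antitone in the temperature
`τ` on `(0, ∞)`: if `0 < τ₁ ≤ τ₂` then `p_k(τ₁) ≥ p_k(τ₂)`. -/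
theorem softmax_max_prob_antitone {m : ℕ} (hm : 2 ≤ m)
    (a : Fin m → ℝ) (k : Fin m) (hk : ∀ j, j ≠ k → a j < a k)
    (τ₁ τ₂ : ℝ) (hτ₁ : 0 < τ₁) (h : τ₁ ≤ τ₂) :
    Real.exp (a k / τ₂) / ∑ j, Real.exp (a j / τ₂)
      ≤ Real.exp (a k / τ₁) / ∑ j, Real.exp (a j / τ₁) := by
  have hτ₂ : 0 < τ₂ := lt_of_lt_of_le hτ₁ h
  -- rewrite p_k(τ) = 1 / ∑ exp((a j - a k)/τ)
  have key : ∀ τ : ℝ, 0 < τ →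
      Real.exp (a k / τ) / ∑ j, Real.exp (a j / τ)
        = 1 / ∑ j, Real.exp ((a j - a k) / τ) := by
    intro τ hτ
    have hsum : (∑ j, Real.exp (a j / τ))
        = Real.exp (a k / τ) * ∑ j, Real.exp ((a j - a k) / τ) := by
      rw [Finset.mul_sum]
      refine Finset.sum_congr rfl fun j _ => ?_
      rw [← Real.exp_add, sub_div]
      ring_nf
    rw [hsum]
    rw [div_mul_eq_div_div, div_self (Real.exp_pos _).ne']
  rw [key τ₁ hτ₁, key τ₂ hτ₂]
  have hpos : ∀ τ : ℝ, 0 < τ → 0 < ∑ j, Real.exp ((a j - a k) / τ) :=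
    fun τ hτ => Finset.sum_pos (fun j _ => Real.exp_pos _) ⟨k, Finset.mem_univ k⟩
  apply one_div_le_one_div_of_le (hpos τ₁ hτ₁)
  refine Finset.sum_le_sum fun j _ => ?_
  apply Real.exp_le_exp.2
  rcases eq_or_ne j k with rfl | hj
  · simp
  · have hneg : a j - a k ≤ 0 := le_of_lt (sub_neg.2 (hk j hj))
    rw [div_le_div_iff₀ hτ₁ hτ₂]
    nlinarith
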